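/- arXiv:2008.00390 — 2 statements merged into one kernel-verified Lean document; each statement's English description precedes it below -/
import Mathlib

section
/- Let G be a finitely generated group and σ, τ : G → G group endomorphisms such that every (σ,τ)-conjugacy class [a]_{σ,τ} = {σ(v)·a·τ(v)⁻¹ : v ∈ G} is finite (G is a (σ,τ)-FC group). Then every quasi-inner (σ,τ)-derivation D of ℂ[G] is inner: there exists p ∈ ℂ[G] such that D(x) = p·τ(x) − σ(x)·p for all x ∈ ℂ[G]. -/
/-!
Put `F g x := D(g)(σ g * x)`. The derivation rule makes `F` a cocycle for the twisted action
`g • x = σ g * x * (τ g)⁻¹` of `G` on itself, and quasi-innerness says that `F g` vanishes at the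
points fixed by `g`. Choosing a representative in each orbit, these two facts make `F` the
coboundary of a function `f` with `f x = 0` whenever all `F g x` vanish. For a finite generating
set `S`, the cocycle identity shows that `F` vanishes at every point whose orbit avoids the
supports of the `F s`, `s ∈ S`; by the FC hypothesis those supports lie in finitely many finite
orbits, so `f` is finitely supported. Then `p := ∑ₓ f x • x` gives `D = δ_p` on the basis
elements, hence everywhere.
-/

/-- Extension of a group endomorphism to a ℂ-algebra endomorphism of `ℂ[G]`. -/
noncomputable def algExt {G : Type*} [Group G] (σ : G →* G) :
    MonoidAlgebra ℂ G →ₐ[ℂ] MonoidAlgebra ℂ G :=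
  MonoidAlgebra.mapDomainAlgHom ℂ ℂ σ

open Function

namespace MulAction

variable {G X A : Type*} [Group G] [MulAction G X] [AddCommGroup A]

def IsCocycle (F : G → X → A) : Prop :=
  ∀ g h x, F (g * h) x = F g (h • x) + F h x

namespace IsCocycle

variable {F : G → X → A}

lemma apply_one (hF : IsCocycle F) (x : X) : F 1 x = 0 := by
  simpa using hF 1 1 x

lemma apply_eq_of_smul_eq (hF : IsCocycle F) (hstab : ∀ g x, g • x = x → F g x = 0)
    {a b : G} {x : X} (h : a • x = b • x) : F a x = F b x := by
  have hfix : (b⁻¹ * a) • x = x := by rw [mul_smul, h, inv_smul_smul]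
  calc F a x = F (b * (b⁻¹ * a)) x := by rw [mul_inv_cancel_left]
    _ = F b x := by rw [hF, hfix, hstab _ _ hfix, add_zero]

def vanishingSubgroup (hF : IsCocycle F) (x : X) : Subgroup G where
  carrier := {g | ∀ h : G, F g (h • x) = 0}
  one_mem' _ := hF.apply_one _
  mul_mem' {a b} ha hb h := by rw [hF, smul_smul, ha, hb, add_zero]
  inv_mem' {a} ha h := by
    simpa [hF.apply_one, smul_smul, ha (a⁻¹ * h)] using (hF a a⁻¹ (h • x)).symm

lemma eq_zero_of_closure_eq_top (hF : IsCocycle F) {S : Set G} (hS : Subgroup.closure S = ⊤)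
    {x : X} (hx : ∀ s ∈ S, ∀ h : G, F s (h • x) = 0) (g : G) : F g x = 0 := by
  have hle : Subgroup.closure S ≤ hF.vanishingSubgroup x := (Subgroup.closure_le _).mpr hx
  simpa using hle (hS ▸ Subgroup.mem_top g) 1

lemma exists_coboundary (hF : IsCocycle F) (hstab : ∀ g x, g • x = x → F g x = 0) :
    ∃ f : X → A, (∀ g x, F g x = f (g • x) - f x) ∧ ∀ x, (∀ g, F g x = 0) → f x = 0 := by
  have hrep (x : X) : ∃ c : G, c • x = (⟦x⟧ : orbitRel.Quotient G X).out :=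
    Quotient.mk_out (s := orbitRel G X) x
  choose c hc using hrep
  refine ⟨fun x ↦ -F (c x) x, fun g x ↦ ?_, fun x hx ↦ by simp [hx]⟩
  have hsame : (c (g • x) * g) • x = c x • x := by
    rw [mul_smul, hc, hc, Quotient.sound (mem_orbit x g)]
  have := hF (c (g • x)) g x
  rw [hF.apply_eq_of_smul_eq hstab hsame] at this
  simp only [this]
  abel

theorem exists_coboundary_finite_support [Group.FG G] (hF : IsCocycle F)
    (hstab : ∀ g x, g • x = x → F g x = 0) (horb : ∀ x : X, (orbit G x).Finite)
    (hsupp : ∀ g, (support (F g)).Finite) :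
    ∃ f : X → A, (∀ g x, F g x = f (g • x) - f x) ∧ (support f).Finite := by
  obtain ⟨S, hS, hSfin⟩ := Group.fg_iff.mp ‹Group.FG G›
  obtain ⟨f, hfF, hf0⟩ := hF.exists_coboundary hstab
  refine ⟨f, hfF, (hSfin.biUnion fun s _ ↦ (hsupp s).biUnion fun y _ ↦ horb y).subset ?_⟩
  intro x hx
  by_contra hbad
  refine hx (hf0 x (hF.eq_zero_of_closure_eq_top hS fun s hs h ↦ ?_))
  by_contra hne
  exact hbad (Set.mem_biUnion hs (Set.mem_biUnion hne (mem_orbit_smul h x)))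

end IsCocycle
end MulAction

open MulAction

/-- A copy of `G`, so that the twisted action below does not clash with left multiplication. -/
@[ext]
structure TwistedConj {G : Type*} [Group G] (σ τ : G →* G) where
  mk ::
  val : G

namespace TwistedConj

variable {G : Type*} [Group G] {σ τ : G →* G}

instance : MulAction G (TwistedConj σ τ) where
  smul g x := mk (σ g * x.val * (τ g)⁻¹)
  one_smul x := by simp [HSMul.hSMul]
  mul_smul g h x := by simp [HSMul.hSMul, mul_assoc]

lemma smul_mk (g x : G) : g • (mk x : TwistedConj σ τ) = mk (σ g * x * (τ g)⁻¹) := rfl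

lemma orbit_finite (hFC : ∀ a : G, {x : G | ∃ v : G, x = σ v * a * (τ v)⁻¹}.Finite)
    (x : TwistedConj σ τ) : (orbit G x).Finite := by
  refine ((hFC x.val).image mk).subset ?_
  rintro _ ⟨v, rfl⟩
  exact ⟨_, ⟨v, rfl⟩, rfl⟩

end TwistedConj

open MonoidAlgebra

section Derivation

variable {G : Type*} [Group G] {σ τ : G →* G}

@[simp]
lemma algExt_single (ρ : G →* G) (g : G) (r : ℂ) : algExt ρ (single g r) = single (ρ g) r := by
  simp [algExt]

noncomputable def innerDeriv (σ τ : G →* G) (p : ℂ[G]) : ℂ[G] →ₗ[ℂ] ℂ[G] :=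
  LinearMap.mulLeft ℂ p ∘ₗ (algExt τ).toLinearMap -
    LinearMap.mulRight ℂ p ∘ₗ (algExt σ).toLinearMap

lemma innerDeriv_apply (p x : ℂ[G]) :
    innerDeriv σ τ p x = p * algExt τ x - algExt σ x * p := rfl

noncomputable def derivCocycle (σ τ : G →* G) (D : ℂ[G] →ₗ[ℂ] ℂ[G]) (g : G)
    (x : TwistedConj σ τ) : ℂ :=
  (D (of ℂ G g)).coeff (σ g * x.val)

variable {D : ℂ[G] →ₗ[ℂ] ℂ[G]}

lemma isCocycle_derivCocycle
    (hD : ∀ a b : ℂ[G], D (a * b) = D a * algExt τ b + algExt σ a * D b) :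
    IsCocycle (derivCocycle σ τ D) := by
  intro g h ⟨x⟩
  have := congr(($(hD (of ℂ G g) (of ℂ G h))).coeff (σ g * (σ h * x)))
  simpa [derivCocycle, TwistedConj.smul_mk, mul_assoc] using this

lemma derivCocycle_eq_zero_of_smul_eq
    (hqi : ∀ g h : G, (σ g)⁻¹ * h = h * (τ g)⁻¹ → (D (of ℂ G g)).coeff h = 0)
    (g : G) (x : TwistedConj σ τ) (hx : g • x = x) : derivCocycle σ τ D g x = 0 := by
  refine hqi g _ ?_
  rw [inv_mul_cancel_left]
  exact congr_arg TwistedConj.val hx.symm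

lemma support_derivCocycle_finite (g : G) : (support (derivCocycle σ τ D g)).Finite :=
  ((D (of ℂ G g)).coeff.support.finite_toSet.preimage
    ((mul_right_injective (σ g)).comp fun _ _ ↦ TwistedConj.ext).injOn).subset
    fun x hx ↦ by simpa [derivCocycle] using hx

lemma eq_innerDeriv_of_coboundary {p : ℂ[G]}
    (hp : ∀ g x, derivCocycle σ τ D g ⟨x⟩ = p.coeff (σ g * x * (τ g)⁻¹) - p.coeff x) :
    D = innerDeriv σ τ p := by
  ext g h
  simpa [derivCocycle, mul_assoc, innerDeriv_apply] using hp g ((σ g)⁻¹ * h)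

end Derivation

/-- if `G` is a finitely generated `(σ,τ)`-FC group (every
`(σ,τ)`-conjugacy class is finite), then every quasi-inner `(σ,τ)`-derivation of `ℂ[G]`
is inner: `D = δ_p` for some `p ∈ ℂ[G]`. -/
theorem quasi_inner_derivation_is_inner_of_FC
    {G : Type*} [Group G] (hfg : Group.FG G) (σ τ : G →* G)
    (hFC : ∀ a : G, {x : G | ∃ v : G, x = σ v * a * (τ v)⁻¹}.Finite)
    (D : MonoidAlgebra ℂ G →ₗ[ℂ] MonoidAlgebra ℂ G)
    (hD : ∀ a b : MonoidAlgebra ℂ G, D (a * b) = D a * algExt τ b + algExt σ a * D b)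
    (hqi : ∀ g h : G, (σ g)⁻¹ * h = h * (τ g)⁻¹ → (D (MonoidAlgebra.of ℂ G g)).coeff h = 0) :
    ∃ p : MonoidAlgebra ℂ G, ∀ x : MonoidAlgebra ℂ G,
      D x = p * algExt τ x - algExt σ x * p := by
  obtain ⟨f, hf, hf_fin⟩ := (isCocycle_derivCocycle hD).exists_coboundary_finite_support
    (derivCocycle_eq_zero_of_smul_eq hqi) (TwistedConj.orbit_finite hFC)
    fun _ ↦ support_derivCocycle_finite _
  let p : ℂ[G] := ofCoeff <| Finsupp.ofSupportFinite (f ∘ TwistedConj.mk)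
    (hf_fin.preimage fun _ _ _ _ ↦ congr_arg TwistedConj.val)
  refine ⟨p, fun x ↦ ?_⟩
  rw [eq_innerDeriv_of_coboundary (p := p) fun g x ↦ hf g ⟨x⟩, innerDeriv_apply]
end

section
/- Let G be a finite group and σ, τ : G → G group endomorphisms. Then every (σ,τ)-derivation D of ℂ[G] is inner: there exists p ∈ ℂ[G] such that D(x) = p·τ(x) − σ(x)·p for all x ∈ ℂ[G]. -/
open MonoidAlgebra

section TwistedCocycle

variable {G R : Type*} [Group G] [Fintype G] [Ring R] (s t : G →* R) (d : G → R)

theorem card_nsmul_twisted_cocycle (hd : ∀ g h, d (g * h) = d g * t h + s g * d h) (h : G) :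
    Fintype.card G • d h = (∑ g, d g * t g⁻¹) * t h - s h * ∑ g, d g * t g⁻¹ := by
  have shift : (∑ g, d g * t g⁻¹) * t h = ∑ g, d (h * g) * t g⁻¹ := by
    rw [Finset.sum_mul, ← Equiv.sum_comp (Equiv.mulLeft h)]
    refine Finset.sum_congr rfl fun g _ ↦ ?_
    simp [mul_assoc, ← map_mul]
  have twist : ∀ g, s h * (d g * t g⁻¹) = d (h * g) * t g⁻¹ - d h := fun g ↦ by
    rw [hd, ← mul_assoc, add_mul, mul_assoc (d h), ← map_mul, mul_inv_cancel, map_one, mul_one]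
    abel
  simp only [shift, Finset.mul_sum, twist, Finset.sum_sub_distrib, Finset.sum_const,
    Finset.card_univ, sub_sub_cancel]

theorem exists_eq_inner_of_twisted_cocycle (k : Type*) [CommRing k] [Algebra k R]
    [Invertible (Fintype.card G : k)] (hd : ∀ g h, d (g * h) = d g * t h + s g * d h) :
    ∃ p : R, ∀ g, d g = p * t g - s g * p := by
  refine ⟨⅟(Fintype.card G : k) • ∑ g, d g * t g⁻¹, fun h ↦ ?_⟩
  rw [smul_mul_assoc, mul_smul_comm, ← smul_sub, ← card_nsmul_twisted_cocycle s t d hd,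
    ← Nat.cast_smul_eq_nsmul k, smul_smul, invOf_mul_self, one_smul]

end TwistedCocycle

lemma algExt_of {G : Type*} [Group G] (σ : G →* G) (g : G) :
    algExt σ (of ℂ G g) = of ℂ G (σ g) := by
  simp [algExt, of_apply]

theorem eq_inner_of_forall_of {G : Type*} [Group G] (σ τ : G →* G)
    (D : MonoidAlgebra ℂ G →ₗ[ℂ] MonoidAlgebra ℂ G) (p : MonoidAlgebra ℂ G)
    (hp : ∀ g, D (of ℂ G g) = p * of ℂ G (τ g) - of ℂ G (σ g) * p) (x : MonoidAlgebra ℂ G) :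
    D x = p * algExt τ x - algExt σ x * p := by
  induction x using MonoidAlgebra.induction_on with
  | of g => rw [algExt_of, algExt_of, hp]
  | add x y hx hy => simp only [map_add, hx, hy, mul_add, add_mul]; abel
  | smul r x hx => simp only [map_smul, hx, smul_sub, mul_smul_comm, smul_mul_assoc]

/-- if `G` is a finite group, then every `(σ,τ)`-derivation of `ℂ[G]`
is inner: `D = δ_p` for some `p ∈ ℂ[G]`. -/
theorem sigma_tau_derivation_inner_of_finite
    {G : Type*} [Group G] [Finite G] (σ τ : G →* G)
    (D : MonoidAlgebra ℂ G →ₗ[ℂ] MonoidAlgebra ℂ G)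
    (hD : ∀ a b : MonoidAlgebra ℂ G, D (a * b) = D a * algExt τ b + algExt σ a * D b) :
    ∃ p : MonoidAlgebra ℂ G, ∀ x : MonoidAlgebra ℂ G,
      D x = p * algExt τ x - algExt σ x * p := by
  have := Fintype.ofFinite G
  have : Invertible (Fintype.card G : ℂ) := invertibleOfNonzero (by simp)
  have cocycle : ∀ g h, D (of ℂ G (g * h)) =
      D (of ℂ G g) * of ℂ G (τ h) + of ℂ G (σ g) * D (of ℂ G h) := fun g h ↦ by
    rw [map_mul, hD, algExt_of, algExt_of]
  obtain ⟨p, hp⟩ := exists_eq_inner_of_twisted_cocycle ((of ℂ G).comp σ) ((of ℂ G).comp τ)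
    (fun g ↦ D (of ℂ G g)) ℂ cocycle
  exact ⟨p, eq_inner_of_forall_of σ τ D p hp⟩
end
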